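/- arXiv:2001.09575 — 3 statements merged into one kernel-verified Lean document; each statement's English description precedes it below -/
import Mathlib

section
/- The number of distinct edge directions of a $k \times n$ transportation polytope is at most $\sum_{p=2}^{k} \frac{1}{p} \cdot \frac{n! \, k!}{(n-p)! \, (k-p)!}$, and this sum is bounded above by $e^{1/n} \, n^k \, k! \le e \cdot k! \, n^k$. -/
/-- The k×n transportation polytope with supplies s and demands d. -/
def transportationPolytope (k n : ℕ) (s : Fin k → ℝ) (d : Fin n → ℝ) :
    Set (Fin k × Fin n → ℝ) :=
  {x | (∀ p, 0 ≤ x p) ∧ (∀ i, ∑ j, x (i, j) = s i) ∧ (∀ j, ∑ i, x (i, j) = d j)}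

open Finset Filter Topology

/-!
An edge `[x, y]` of the polytope has a direction `y - x` with zero row and column sums. Walking
through the support of such a matrix, alternately along a column and along a row and never
straight back, one must revisit a row or a column, and the first revisit closes an alternating
cycle of `K_{k,n}` inside the support. Its `±1` vector `u` also has zero margins and is supported
where the midpoint `m` of the edge is positive, so `m ± ε u` stay in the polytope for small `ε`;
as `[x, y]` is a face through `m`, this forces `u ∥ y - x`. So every edge direction is the line of
a cycle vector. A cycle of length `2p` has `k!/(k-p)! · n!/(n-p)!` parametrisations, and its `p`
cyclic shifts give the same vector. The remaining estimates are `n!/(n-p)! ≤ n^p` and the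
exponential series.
-/

section AltCycles

variable {α β : Type*}

def HasZeroMargins [Fintype α] [Fintype β] (v : α × β → ℝ) : Prop :=
  (∀ i, ∑ j, v (i, j) = 0) ∧ ∀ j, ∑ i, v (i, j) = 0

lemma HasZeroMargins.smul [Fintype α] [Fintype β] {v : α × β → ℝ} (hv : HasZeroMargins v)
    (c : ℝ) : HasZeroMargins (c • v) :=
  ⟨fun i => by simp [← mul_sum, hv.1], fun j => by simp [← mul_sum, hv.2]⟩

-- The walk `r 0 – c 0 – r 1 – c 1 – ⋯` of `K_{α,β}` through the support of `v`, never turning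
-- straight back.
def IsAltWalk (v : α × β → ℝ) (r : ℕ → α) (c : ℕ → β) : Prop :=
  ∀ t, v (r t, c t) ≠ 0 ∧ v (r (t + 1), c t) ≠ 0 ∧ r (t + 1) ≠ r t ∧ c (t + 1) ≠ c t

-- The cycle `a 0 – b 0 – a 1 – b 1 – ⋯ – b (p - 1) – a 0` of `K_{α,β}` through the support of `v`.
def IsAltCycle (v : α × β → ℝ) {p : ℕ} (a : Fin p → α) (b : Fin p → β) : Prop :=
  ∀ t, v (a t, b t) ≠ 0 ∧ v (a (finRotate p t), b t) ≠ 0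

lemma exists_ne_and_ne_zero_of_sum_eq_zero {ι M : Type*} [Fintype ι] [AddCommMonoid M]
    {f : ι → M} (hf : ∑ i, f i = 0) {i₀ : ι} (hi₀ : f i₀ ≠ 0) : ∃ i ≠ i₀, f i ≠ 0 := by
  by_contra! h
  exact hi₀ (by rwa [Fintype.sum_eq_single i₀ h] at hf)

lemma exists_isAltWalk [Fintype α] [Fintype β] {v : α × β → ℝ} (hv : HasZeroMargins v)
    (hv₀ : v ≠ 0) : ∃ r c, IsAltWalk v r c := by
  have step : ∀ e : {e // v e ≠ 0}, ∃ e' : {e // v e ≠ 0},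
      v (e'.1.1, e.1.2) ≠ 0 ∧ e'.1.1 ≠ e.1.1 ∧ e'.1.2 ≠ e.1.2 := by
    rintro ⟨⟨i, j⟩, he⟩
    obtain ⟨i', hi', hvi'⟩ := exists_ne_and_ne_zero_of_sum_eq_zero (hv.2 j) he
    obtain ⟨j', hj', hvj'⟩ := exists_ne_and_ne_zero_of_sum_eq_zero (hv.1 i') hvi'
    exact ⟨⟨(i', j'), hvj'⟩, hvi', hi', hj'⟩
  choose g hg using step
  obtain ⟨e₀, he₀⟩ := Function.ne_iff.1 hv₀
  let e : ℕ → {e // v e ≠ 0} := fun t => g^[t] ⟨e₀, he₀⟩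
  refine ⟨fun t => (e t).1.1, fun t => (e t).1.2, fun t => ?_⟩
  simp only [e, Function.iterate_succ_apply']
  exact ⟨(e t).2, hg (e t)⟩

lemma Set.injOn_of_lt_imp_ne {ι : Type*} [LinearOrder ι] {f : ι → α} {S : Set ι}
    (h : ∀ i ∈ S, ∀ j ∈ S, i < j → f i ≠ f j) : S.InjOn f := by
  intro i hi j hj hij
  by_contra hne
  rcases lt_or_gt_of_ne hne with hlt | hlt
  exacts [h i hi j hj hlt hij, h j hj i hi hlt hij.symm]

lemma Set.InjOn.injective_fin_add {f : ℕ → α} {s T : ℕ} (hf : (Set.Ico s T).InjOn f) :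
    Function.Injective fun u : Fin (T - s) => f (s + u) := fun u u' h =>
  Fin.ext (by have := hf ⟨by omega, by omega⟩ ⟨by omega, by omega⟩ h; omega)

lemma IsAltWalk.exists_isAltCycle_of_closed {v : α × β → ℝ} {r : ℕ → α} {c : ℕ → β}
    (hw : IsAltWalk v r c) {s T : ℕ} (hr : (Set.Ico s T).InjOn r) (hc : (Set.Ico s T).InjOn c)
    (hclose : v (r s, c (T - 1)) ≠ 0) :
    ∃ (a : Fin (T - s) ↪ α) (b : Fin (T - s) ↪ β), IsAltCycle v a b := by
  refine ⟨⟨_, hr.injective_fin_add⟩, ⟨_, hc.injective_fin_add⟩, fun u => ⟨(hw _).1, ?_⟩⟩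
  obtain ⟨q, hq⟩ : ∃ q, T - s = q + 1 := Nat.exists_eq_add_one_of_ne_zero u.pos.ne'
  simp only [Function.Embedding.coeFn_mk]
  revert u
  rw [hq]
  intro u
  rw [coe_finRotate]
  split_ifs with hu
  · subst hu
    simpa [show s + q = T - 1 by omega] using hclose
  · simpa [add_assoc] using (hw (s + u)).2.1

lemma IsAltWalk.exists_isAltCycle [Finite α] {v : α × β → ℝ} {r : ℕ → α} {c : ℕ → β}
    (hw : IsAltWalk v r c) :
    ∃ p, 2 ≤ p ∧ ∃ (a : Fin p ↪ α) (b : Fin p ↪ β), IsAltCycle v a b := by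
  classical
  have hrep : ∃ T, ∃ s < T, r s = r T ∨ c s = c T := by
    obtain ⟨s, t, hst, hr⟩ := Finite.exists_ne_map_eq_of_infinite r
    rcases lt_or_gt_of_ne hst with h | h
    exacts [⟨t, s, h, .inl hr⟩, ⟨s, t, h, .inl hr.symm⟩]
  obtain ⟨s, hsT, hrepT⟩ := Nat.find_spec hrep
  set T := Nat.find hrep
  have hmin : ∀ t < T, ∀ s < t, r s ≠ r t ∧ c s ≠ c t := fun t ht s hs => by
    have := Nat.find_min hrep ht
    push Not at this
    exact this s hs
  -- `T` is the first time the walk revisits a row or a column. A revisited row closes the cycle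
  -- with a walk edge; after a revisited column `c s = c T` the cycle starts at `s + 1` and is
  -- closed by the edge `(r (s + 1), c s)`.
  by_cases hrow : ∃ s < T, r s = r T
  · obtain ⟨s, hs, hrs⟩ := hrow
    have hlen : 2 ≤ T - s := by
      by_contra! h
      exact (hw s).2.2.1 (by rw [hrs, show s + 1 = T by omega])
    refine ⟨T - s, hlen, hw.exists_isAltCycle_of_closed ?_ ?_ ?_⟩
    · exact Set.injOn_of_lt_imp_ne fun i _ j hj hij => (hmin j hj.2 i hij).1
    · exact Set.injOn_of_lt_imp_ne fun i _ j hj hij => (hmin j hj.2 i hij).2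
    · simpa [hrs, show T - 1 + 1 = T by omega] using (hw (T - 1)).2.1
  · have hcs : c s = c T := hrepT.resolve_left fun h => hrow ⟨s, hsT, h⟩
    have hlen : 2 ≤ T - s := by
      by_contra! h
      exact (hw s).2.2.2 (by rw [hcs, show s + 1 = T by omega])
    have := hw.exists_isAltCycle_of_closed (s := s + 1) (T := T + 1) ?_ ?_ ?_
    · rw [Nat.add_sub_add_right] at this
      exact ⟨T - s, hlen, this⟩
    · refine Set.injOn_of_lt_imp_ne fun i _ j hj hij => ?_
      rcases Nat.lt_succ_iff_lt_or_eq.1 hj.2 with hj | rfl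
      exacts [(hmin j hj i hij).1, fun h => hrow ⟨i, hij, h⟩]
    · refine Set.injOn_of_lt_imp_ne fun i hi j hj hij => ?_
      rcases Nat.lt_succ_iff_lt_or_eq.1 hj.2 with hj | rfl
      · exact (hmin j hj i hij).2
      · rw [← hcs]
        exact fun h => (hmin i hij s hi.1).2 h.symm
    · simpa [hcs] using (hw s).2.1

section CycleVec

variable [DecidableEq α] [DecidableEq β] {p : ℕ}

def cycleVec (a : Fin p → α) (b : Fin p → β) : α × β → ℝ :=
  ∑ t, (Pi.single (a t, b t) 1 - Pi.single (a (finRotate p t), b t) 1)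

lemma cycleVec_apply (a : Fin p → α) (b : Fin p → β) (e : α × β) :
    cycleVec a b e = ∑ t, ((if e = (a t, b t) then 1 else 0) -
      if e = (a (finRotate p t), b t) then 1 else 0) := by
  simp [cycleVec, Pi.single_apply]

lemma hasZeroMargins_cycleVec [Fintype α] [Fintype β] (a : Fin p → α) (b : Fin p → β) :
    HasZeroMargins (cycleVec a b) := by
  constructor
  · intro i
    have hsum (i' : α) (j' : β) :
        ∑ j, (if (i, j) = (i', j') then (1 : ℝ) else 0) = if i = i' then 1 else 0 := by
      simp [Prod.ext_iff, ite_and]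
    simp only [cycleVec_apply]
    rw [sum_comm]
    simp only [sum_sub_distrib, hsum]
    exact sub_eq_zero.2 (Equiv.sum_comp (finRotate p) fun t => if i = a t then (1 : ℝ) else 0).symm
  · intro j
    simp only [cycleVec_apply]
    rw [sum_comm]
    simp [Prod.ext_iff, ite_and]

lemma IsAltCycle.ne_zero_of_cycleVec_ne_zero {v : α × β → ℝ} {a : Fin p → α} {b : Fin p → β}
    (hv : IsAltCycle v a b) {e : α × β} (he : cycleVec a b e ≠ 0) : v e ≠ 0 := by
  contrapose! he
  rw [cycleVec_apply]
  refine sum_eq_zero fun t _ => ?_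
  rw [if_neg, if_neg, sub_zero] <;> rintro rfl
  exacts [(hv t).2 he, (hv t).1 he]

lemma cycleVec_apply_self {a : Fin p → α} {b : Fin p → β} (ha : a.Injective) (hb : b.Injective)
    (hp : 2 ≤ p) (t : Fin p) : cycleVec a b (a t, b t) = 1 := by
  obtain ⟨q, rfl⟩ := Nat.exists_eq_add_of_le' hp
  rw [cycleVec_apply, sum_sub_distrib, sum_eq_single t, sum_eq_zero] <;>
    simp +contextual [hb.eq_iff, ha.eq_iff, eq_comm]

lemma cycleVec_comp_addRight [NeZero p] (a : Fin p → α) (b : Fin p → β) (r : Fin p) :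
    cycleVec (fun t => a (t + r)) (fun t => b (t + r)) = cycleVec a b := by
  simp only [cycleVec, finRotate_apply, add_right_comm _ (1 : Fin p) r]
  exact Equiv.sum_comp (Equiv.addRight r) fun t =>
    (Pi.single (a t, b t) 1 - Pi.single (a (t + 1), b t) 1 : α × β → ℝ)

lemma card_image_span_cycleVec_mul_le [Fintype α] [Fintype β]
    [DecidableEq (Submodule ℝ (α × β → ℝ))] (p : ℕ) :
    #(univ.image fun ab : (Fin p ↪ α) × (Fin p ↪ β) => ℝ ∙ cycleVec ab.1 ab.2) * p ≤
      (Fintype.card α).descFactorial p * (Fintype.card β).descFactorial p := by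
  rcases Nat.eq_zero_or_pos p with rfl | hp
  · simp
  have : NeZero p := .of_pos hp
  rw [mul_comm]
  convert mul_card_image_le_card univ p fun ℓ hℓ => ?_
  · simp [Fintype.card_embedding_eq]
  obtain ⟨⟨a, b⟩, -, rfl⟩ := mem_image.1 hℓ
  let rotate (r : Fin p) : (Fin p ↪ α) × (Fin p ↪ β) :=
    ((Equiv.addRight r).toEmbedding.trans a, (Equiv.addRight r).toEmbedding.trans b)
  have hrotate (r : Fin p) : ℝ ∙ cycleVec (rotate r).1 (rotate r).2 = ℝ ∙ cycleVec a b :=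
    congrArg (ℝ ∙ ·) (cycleVec_comp_addRight a b r)
  have hinj : Function.Injective rotate := fun r r' h => by
    simpa [rotate] using congr(($h).1 r)
  calc p = #(univ : Finset (Fin p)) := by simp
    _ ≤ _ := card_le_card_of_injOn rotate (fun r _ => by simp [hrotate]) hinj.injOn

end CycleVec

end AltCycles

lemma mem_span_sub_of_isExtreme_segment {E : Type*} [AddCommGroup E] [Module ℝ E] {A : Set E}
    {x y u : E} (hA : IsExtreme ℝ A (segment ℝ x y)) (hplus : midpoint ℝ x y + u ∈ A)
    (hminus : midpoint ℝ x y - u ∈ A) : u ∈ ℝ ∙ (y - x) := by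
  have hopen : midpoint ℝ x y ∈ openSegment ℝ (midpoint ℝ x y + u) (midpoint ℝ x y - u) :=
    ⟨1 / 2, 1 / 2, by norm_num, by norm_num, by norm_num, by module⟩
  obtain ⟨a, b, -, -, hab, h⟩ :=
    hA.left_mem_of_mem_openSegment hplus hminus (midpoint_mem_segment x y) hopen
  refine Submodule.mem_span_singleton.2 ⟨b - 1 / 2, ?_⟩
  rw [midpoint_eq_smul_add, invOf_eq_inv, eq_sub_of_add_eq hab] at h
  linear_combination (norm := module) h

section Polytope

variable {k n : ℕ} {s : Fin k → ℝ} {d : Fin n → ℝ}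

lemma hasZeroMargins_sub {x y : Fin k × Fin n → ℝ} (hx : x ∈ transportationPolytope k n s d)
    (hy : y ∈ transportationPolytope k n s d) : HasZeroMargins (y - x) :=
  ⟨fun i => by simp [sum_sub_distrib, hx.2.1, hy.2.1],
    fun j => by simp [sum_sub_distrib, hx.2.2, hy.2.2]⟩

lemma add_mem_transportationPolytope {m w : Fin k × Fin n → ℝ}
    (hm : m ∈ transportationPolytope k n s d) (hw : HasZeroMargins w) (hnonneg : 0 ≤ m + w) :
    m + w ∈ transportationPolytope k n s d :=
  ⟨hnonneg, fun i => by simp [sum_add_distrib, hm.2.1, hw.1],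
    fun j => by simp [sum_add_distrib, hm.2.2, hw.2]⟩

lemma exists_pos_add_smul_mem_and_sub_smul_mem {m u : Fin k × Fin n → ℝ}
    (hm : m ∈ transportationPolytope k n s d) (hu : HasZeroMargins u)
    (hsupp : ∀ e, u e ≠ 0 → 0 < m e) :
    ∃ ε : ℝ, 0 < ε ∧ m + ε • u ∈ transportationPolytope k n s d ∧
      m - ε • u ∈ transportationPolytope k n s d := by
  have hnonneg : ∀ᶠ t in 𝓝 (0 : ℝ), 0 ≤ m + t • u := by
    refine eventually_all.2 fun e => ?_
    by_cases he : u e = 0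
    · simp [he, hm.1 e]
    · have : Tendsto (fun t : ℝ => m e + t * u e) (𝓝 0) (𝓝 (m e)) :=
        Continuous.tendsto' (by fun_prop) _ _ (by simp)
      filter_upwards [this.eventually_const_lt (hsupp e he)] with t ht
      exact ht.le
  have hneg : ∀ᶠ t in 𝓝 (0 : ℝ), 0 ≤ m + (-t) • u :=
    (continuous_neg.tendsto' 0 0 neg_zero).eventually hnonneg
  obtain ⟨ε, hε, hplus, hminus⟩ := (hnonneg.and hneg).exists_gt
  refine ⟨ε, hε, add_mem_transportationPolytope hm (hu.smul ε) hplus, ?_⟩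
  rw [sub_eq_add_neg, ← neg_smul]
  exact add_mem_transportationPolytope hm (hu.smul _) hminus

lemma exists_cycleVec_of_isExposed_segment {x y : Fin k × Fin n → ℝ} (hxy : x ≠ y)
    (hexp : IsExposed ℝ (transportationPolytope k n s d) (segment ℝ x y)) :
    ∃ p, 2 ≤ p ∧ ∃ (a : Fin p ↪ Fin k) (b : Fin p ↪ Fin n), ℝ ∙ (y - x) = ℝ ∙ cycleVec a b := by
  have hx := hexp.subset (left_mem_segment ℝ x y)
  have hy := hexp.subset (right_mem_segment ℝ x y)
  obtain ⟨r, c, hw⟩ := exists_isAltWalk (hasZeroMargins_sub hx hy) (sub_ne_zero.2 hxy.symm)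
  obtain ⟨p, hp, a, b, hcycle⟩ := hw.exists_isAltCycle
  refine ⟨p, hp, a, b, ?_⟩
  have hsupp (e) (he : cycleVec a b e ≠ 0) : 0 < midpoint ℝ x y e := by
    have hne : x e ≠ y e := fun h => hcycle.ne_zero_of_cycleVec_ne_zero he (by simp [h])
    have : 0 < x e + y e := by
      have := hx.1 e
      have := hy.1 e
      rcases lt_or_gt_of_ne hne with h | h <;> linarith
    rw [midpoint_eq_smul_add]
    simp only [Pi.smul_apply, Pi.add_apply, smul_eq_mul, invOf_eq_inv]
    positivity
  obtain ⟨ε, hε, hplus, hminus⟩ := exists_pos_add_smul_mem_and_sub_smul_mem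
    (hexp.subset (midpoint_mem_segment x y)) (hasZeroMargins_cycleVec a b) hsupp
  obtain ⟨t, ht⟩ := Submodule.mem_span_singleton.1 <| (Submodule.smul_mem_iff _ hε.ne').1 <|
    mem_span_sub_of_isExtreme_segment hexp.isExtreme hplus hminus
  have ht₀ : t ≠ 0 := by
    rintro rfl
    have := cycleVec_apply_self a.injective b.injective hp ⟨0, by omega⟩
    simp [← ht] at this
  rw [← ht, Submodule.span_singleton_smul_eq (isUnit_iff_ne_zero.2 ht₀)]

end Polytope

def edgeDirections (k n : ℕ) (s : Fin k → ℝ) (d : Fin n → ℝ) :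
    Set (Submodule ℝ (Fin k × Fin n → ℝ)) :=
  {W | ∃ x y : Fin k × Fin n → ℝ, x ≠ y ∧
    IsExposed ℝ (transportationPolytope k n s d) (segment ℝ x y) ∧ W = Submodule.span ℝ {y - x}}

noncomputable def numAltCycles (k n : ℕ) : ℝ :=
  ∑ p ∈ Icc 2 k, (1 / (p : ℝ)) *
    ((n.factorial : ℝ) * k.factorial / ((n - p).factorial * (k - p).factorial))

lemma Nat.cast_descFactorial_eq_div {K : Type*} [Field K] [CharZero K] {n p : ℕ} (h : p ≤ n) :
    (n.descFactorial p : K) = n.factorial / (n - p).factorial := by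
  rw [eq_div_iff (Nat.cast_ne_zero.2 (Nat.factorial_ne_zero _)), mul_comm]
  exact_mod_cast Nat.factorial_mul_descFactorial h

lemma ncard_edgeDirections_le_numAltCycles {k n : ℕ} (hkn : k ≤ n) (s : Fin k → ℝ)
    (d : Fin n → ℝ) : ((edgeDirections k n s d).ncard : ℝ) ≤ numAltCycles k n := by
  classical
  let lines (p : ℕ) : Finset (Submodule ℝ (Fin k × Fin n → ℝ)) :=
    univ.image fun ab : (Fin p ↪ Fin k) × (Fin p ↪ Fin n) => ℝ ∙ cycleVec ab.1 ab.2
  have hsub : edgeDirections k n s d ⊆ ↑((Icc 2 k).biUnion lines) := by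
    rintro _ ⟨x, y, hxy, hexp, rfl⟩
    obtain ⟨p, hp, a, b, h⟩ := exists_cycleVec_of_isExposed_segment hxy hexp
    simp only [coe_biUnion, coe_Icc, Set.mem_iUnion, mem_coe, mem_image, lines]
    exact ⟨p, ⟨hp, Fin.le_of_embedding a⟩, (a, b), mem_univ _, h.symm⟩
  have hlines (p : ℕ) (hp : p ∈ Icc 2 k) : (#(lines p) : ℝ) ≤ 1 / (p : ℝ) *
      ((n.factorial : ℝ) * k.factorial / ((n - p).factorial * (k - p).factorial)) := by
    have hpk := (mem_Icc.1 hp).2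
    have hcount : (#(lines p) : ℝ) * p ≤ k.descFactorial p * n.descFactorial p := by
      have := card_image_span_cycleVec_mul_le (α := Fin k) (β := Fin n) p
      simp only [Fintype.card_fin] at this
      exact_mod_cast this
    rw [Nat.cast_descFactorial_eq_div hpk, Nat.cast_descFactorial_eq_div (hpk.trans hkn)] at hcount
    have hp₀ : (0 : ℝ) < p := by have := (mem_Icc.1 hp).1; positivity
    rw [← le_div_iff₀ hp₀] at hcount
    exact hcount.trans_eq (by ring)
  calc ((edgeDirections k n s d).ncard : ℝ) ≤ #((Icc 2 k).biUnion lines) := by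
        exact_mod_cast (Set.ncard_le_ncard hsub (finite_toSet _)).trans_eq (Set.ncard_coe_finset _)
    _ ≤ ∑ p ∈ Icc 2 k, (#(lines p) : ℝ) := by exact_mod_cast card_biUnion_le
    _ ≤ numAltCycles k n := sum_le_sum hlines

lemma numAltCycles_le_exp {k n : ℕ} (hn : 0 < n) (hkn : k ≤ n) :
    numAltCycles k n ≤ Real.exp (1 / n) * n ^ k * k.factorial := by
  have hn' : (0 : ℝ) < n := by exact_mod_cast hn
  have hterm (p : ℕ) (hp : p ∈ Icc 2 k) :
      1 / (p : ℝ) * ((n.factorial : ℝ) * k.factorial / ((n - p).factorial * (k - p).factorial)) ≤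
        n ^ k * k.factorial * ((1 / n : ℝ) ^ (k - p) / (k - p).factorial) := by
    have hpk := (mem_Icc.1 hp).2
    have hpow : (n : ℝ) ^ k * (1 / n) ^ (k - p) = n ^ p := by
      rw [one_div, inv_pow, ← pow_sub₀ _ hn'.ne' (Nat.sub_le k p), Nat.sub_sub_self hpk]
    have hdesc : (n.factorial : ℝ) / (n - p).factorial ≤ n ^ p := by
      rw [← Nat.cast_descFactorial_eq_div (hpk.trans hkn)]
      exact_mod_cast Nat.descFactorial_le_pow n p
    have hp : 1 / (p : ℝ) ≤ 1 := by simpa using Nat.cast_inv_le_one p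
    calc 1 / (p : ℝ) * ((n.factorial : ℝ) * k.factorial / ((n - p).factorial * (k - p).factorial))
        = 1 / (p : ℝ) * ((n.factorial : ℝ) / (n - p).factorial) *
            ((k.factorial : ℝ) / (k - p).factorial) := by ring
      _ ≤ 1 * n ^ p * ((k.factorial : ℝ) / (k - p).factorial) := by gcongr
      _ = n ^ k * k.factorial * ((1 / n : ℝ) ^ (k - p) / (k - p).factorial) := by
        rw [← hpow]; ring
  have hreflect : ∑ p ∈ Icc 2 k, (1 / n : ℝ) ^ (k - p) / (k - p).factorial ≤
      ∑ q ∈ range (k + 1), (1 / n : ℝ) ^ q / q.factorial := by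
    calc _ ≤ ∑ p ∈ range (k + 1), (1 / n : ℝ) ^ (k - p) / (k - p).factorial :=
          sum_le_sum_of_subset_of_nonneg
            (fun p hp => mem_range.2 (Nat.lt_succ_of_le (mem_Icc.1 hp).2))
            fun _ _ _ => by positivity
      _ = _ := by simpa using sum_range_reflect (fun q => (1 / n : ℝ) ^ q / q.factorial) (k + 1)
  calc numAltCycles k n
      ≤ ∑ p ∈ Icc 2 k, n ^ k * k.factorial * ((1 / n : ℝ) ^ (k - p) / (k - p).factorial) :=
        sum_le_sum hterm
    _ ≤ n ^ k * k.factorial * Real.exp (1 / n) := by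
        rw [← mul_sum]
        gcongr
        exact hreflect.trans (Real.sum_le_exp_of_nonneg (by positivity) _)
    _ = Real.exp (1 / n) * n ^ k * k.factorial := by ring

/-- the number of distinct edge directions (lines spanned by geometric edges)
of a k×n transportation polytope is at most ∑_{p=2}^k (1/p)·n!k!/((n-p)!(k-p)!), which is
at most e^{1/n}·nᵏ·k! ≤ e·k!·nᵏ. -/
theorem stmt_5 (k n : ℕ) (hk : 2 ≤ k) (hkn : k ≤ n) (s : Fin k → ℝ) (d : Fin n → ℝ) :
    ({W : Submodule ℝ (Fin k × Fin n → ℝ) | ∃ x y : Fin k × Fin n → ℝ, x ≠ y ∧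
        IsExposed ℝ (transportationPolytope k n s d) (segment ℝ x y) ∧
        W = Submodule.span ℝ {y - x}}.ncard : ℝ)
      ≤ ∑ p ∈ Finset.Icc 2 k, (1 / (p : ℝ)) *
          ((n.factorial : ℝ) * k.factorial / ((n - p).factorial * (k - p).factorial)) ∧
    ∑ p ∈ Finset.Icc 2 k, (1 / (p : ℝ)) *
          ((n.factorial : ℝ) * k.factorial / ((n - p).factorial * (k - p).factorial))
        ≤ Real.exp (1 / n) * (n : ℝ) ^ k * k.factorial ∧
    Real.exp (1 / n) * (n : ℝ) ^ k * k.factorial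
        ≤ Real.exp 1 * (k.factorial : ℝ) * (n : ℝ) ^ k := by
  refine ⟨ncard_edgeDirections_le_numAltCycles hkn s d, numAltCycles_le_exp (by omega) hkn, ?_⟩
  calc Real.exp (1 / n) * (n : ℝ) ^ k * k.factorial
      ≤ Real.exp 1 * (n : ℝ) ^ k * k.factorial := by
        gcongr
        simpa using Nat.cast_inv_le_one n
    _ = Real.exp 1 * (k.factorial : ℝ) * (n : ℝ) ^ k := by ring
end

section
/- Let $x^*$ be the optimal vertex of a nondegenerate transportation problem with cost $c$, with support a spanning tree $T$. Let $s_1,\ldots,s_k$ be supply nodes and $d_1,\ldots,d_k$ demand nodes ($k\ge 2$) with $s_i$ adjacent to $d_i$ in $T$ for all $i$. Then $c_{s_1,d_1} - c_{d_1,s_2} + c_{s_2,d_2} - c_{d_2,s_3} + \cdots + c_{s_k,d_k} - c_{d_k,s_1} < 0$. -/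
/-- The m×n transportation polytope with supplies s and demands d. -/
def transportationPolytope' (m n : ℕ) (s : Fin m → ℝ) (d : Fin n → ℝ) :
    Set (Fin m → Fin n → ℝ) :=
  {x | (∀ i j, 0 ≤ x i j) ∧ (∀ i, ∑ j, x i j = s i) ∧ (∀ j, ∑ i, x i j = d j)}

/-!
Let `ε = min_t x*(s_t, d_t) > 0` and push `ε` units of flow around the alternating cycle
`s₁ d₁ s₂ d₂ ⋯ s_k d_k s₁`: remove it from the tree edges `(s_t, d_t)` and add it on the edges
`(s_{t+1}, d_t)`. Row and column sums are unchanged, so this gives a feasible point `y ≠ x*`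
whose cost is `cost x* - ε S`, where `S` is the alternating cycle sum. Nondegeneracy makes `x*`
the unique optimum (by Krein–Milman, the optimal face is the closed convex hull of its extreme
points, which are vertices of the polytope), hence `cost x* < cost y` and `S < 0`.
-/

open Finset

section UniqueMinimizer

variable {E : Type*} [AddCommGroup E] [Module ℝ E] [TopologicalSpace E] [T2Space E]
  [IsTopologicalAddGroup E] [ContinuousSMul ℝ E] [LocallyConvexSpace ℝ E]

theorem lt_of_forall_extremePoints_lt {P : Set E} (hPcpt : IsCompact P) (hPconv : Convex ℝ P)
    (f : StrongDual ℝ E) {x : E} (hx : x ∈ P)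
    (hext : ∀ z ∈ P.extremePoints ℝ, z ≠ x → f x < f z) {y : E} (hy : y ∈ P) (hyx : y ≠ x) :
    f x < f y := by
  set F := (-f).toExposed P
  have hF : IsExposed ℝ P F := ContinuousLinearMap.toExposed.isExposed
  have hFx : F ⊆ {x} := by
    have hextF : F.extremePoints ℝ ⊆ {x} := fun z hz => by
      by_contra hzx
      have hlt := hext z (hF.isExtreme.extremePoints_subset_extremePoints hz) hzx
      have hle : -f x ≤ -f z := hz.1.2 x hx
      linarith
    rw [← closure_convexHull_extremePoints (hF.isCompact hPcpt) (hF.convex hPconv)]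
    simpa using closure_mono (convexHull_mono hextF)
  obtain ⟨w, hwP, hwmin⟩ := hPcpt.exists_isMinOn ⟨x, hx⟩ f.continuous.continuousOn
  obtain rfl : w = x := hFx ⟨hwP, fun v hv => neg_le_neg (hwmin hv)⟩
  by_contra! hyw
  exact hyx (hFx ⟨hy, fun v hv => neg_le_neg (hyw.trans (hwmin hv))⟩)

end UniqueMinimizer

noncomputable def costFunctional {ι κ : Type*} [Fintype ι] [Fintype κ] (c : ι → κ → ℝ) :
    StrongDual ℝ (ι → κ → ℝ) :=
  LinearMap.toContinuousLinearMap
    { toFun := fun x => ∑ i, ∑ j, c i j * x i j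
      map_add' := fun x y => by simp only [Pi.add_apply, mul_add, sum_add_distrib]
      map_smul' := fun a x => by simp [mul_sum, mul_left_comm] }

@[simp]
theorem costFunctional_apply {ι κ : Type*} [Fintype ι] [Fintype κ] (c x : ι → κ → ℝ) :
    costFunctional c x = ∑ i, ∑ j, c i j * x i j :=
  rfl

section Circulation

variable {ι κ : Type*} [DecidableEq ι] [DecidableEq κ] {k : ℕ} [NeZero k]
  (sC : Fin k → ι) (dC : Fin k → κ)

/-- The unit flow around the closed walk `sC 0, dC 0, sC 1, dC 1, …, sC (k-1), dC (k-1), sC 0`,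
oriented so that it runs backwards along the edges `(sC t, dC t)`. -/
def cycleCirculation : ι → κ → ℝ := fun i j =>
  ∑ t, ((if i = sC (t + 1) ∧ j = dC t then 1 else 0) - (if i = sC t ∧ j = dC t then 1 else 0))

theorem sum_cycleCirculation_row [Fintype κ] (i : ι) : ∑ j, cycleCirculation sC dC i j = 0 := by
  simp only [cycleCirculation]
  rw [sum_comm]
  simpa [sum_sub_distrib, ite_and, sub_eq_zero] using
    card_equiv (Equiv.addRight (1 : Fin k)) (by simp)

theorem sum_cycleCirculation_col [Fintype ι] (j : κ) : ∑ i, cycleCirculation sC dC i j = 0 := by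
  simp only [cycleCirculation]
  rw [sum_comm]
  exact sum_eq_zero fun t _ => by simp [sum_sub_distrib, ite_and]

theorem costFunctional_cycleCirculation [Fintype ι] [Fintype κ] (c : ι → κ → ℝ) :
    costFunctional c (cycleCirculation sC dC)
      = -∑ t, (c (sC t) (dC t) - c (sC (t + 1)) (dC t)) := by
  simp only [costFunctional_apply, cycleCirculation, mul_sum]
  rw [sum_congr rfl fun i _ => sum_comm, sum_comm, ← sum_neg_distrib]
  simp [mul_sub, sum_sub_distrib, ite_and]

theorem cycleCirculation_apply_self (hk : 2 ≤ k) (hsC : Function.Injective sC)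
    (hdC : Function.Injective dC) (t : Fin k) : cycleCirculation sC dC (sC t) (dC t) = -1 := by
  simp only [cycleCirculation, sum_sub_distrib, hsC.eq_iff, hdC.eq_iff]
  simp [and_comm, eq_comm (a := t)]
  omega

theorem cycleCirculation_nonneg_of_not_exists {i : ι} {j : κ}
    (h : ¬∃ t, i = sC t ∧ j = dC t) : 0 ≤ cycleCirculation sC dC i j :=
  sum_nonneg fun t _ => by simp only [if_neg (not_exists.1 h t)]; split <;> norm_num

end Circulation

section TransportationPolytope

variable {m n : ℕ} {s : Fin m → ℝ} {d : Fin n → ℝ}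

theorem convex_transportationPolytope' : Convex ℝ (transportationPolytope' m n s d) := by
  rintro x ⟨hx0, hxr, hxc⟩ y ⟨hy0, hyr, hyc⟩ a b ha hb hab
  refine ⟨fun i j => ?_, fun i => ?_, fun j => ?_⟩
  · exact add_nonneg (mul_nonneg ha (hx0 i j)) (mul_nonneg hb (hy0 i j))
  · simp [sum_add_distrib, ← mul_sum, hxr, hyr, ← add_mul, hab]
  · simp [sum_add_distrib, ← mul_sum, hxc, hyc, ← add_mul, hab]

theorem isClosed_transportationPolytope' : IsClosed (transportationPolytope' m n s d) := by
  simp only [transportationPolytope', Set.ofPred_and, Set.ofPred_forall]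
  refine .inter (isClosed_iInter fun i => isClosed_iInter fun j =>
    isClosed_le continuous_const (by fun_prop)) (.inter ?_ ?_) <;>
  exact isClosed_iInter fun _ => isClosed_eq (by fun_prop) continuous_const

theorem isCompact_transportationPolytope' : IsCompact (transportationPolytope' m n s d) := by
  refine (isCompact_univ_pi fun i => isCompact_univ_pi fun _ => isCompact_Icc (a := 0) (b := s i))
    |>.of_isClosed_subset isClosed_transportationPolytope' fun x ⟨hx0, hxr, _⟩ i _ j _ => ?_
  exact ⟨hx0 i j, hxr i ▸ single_le_sum (fun j _ => hx0 i j) (mem_univ j)⟩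

theorem add_smul_cycleCirculation_mem_transportationPolytope' {x : Fin m → Fin n → ℝ}
    (hx : x ∈ transportationPolytope' m n s d) {k : ℕ} [NeZero k] (hk : 2 ≤ k)
    {sC : Fin k → Fin m} {dC : Fin k → Fin n} (hsC : Function.Injective sC)
    (hdC : Function.Injective dC) {ε : ℝ} (hε : 0 ≤ ε) (hεx : ∀ t, ε ≤ x (sC t) (dC t)) :
    x + ε • cycleCirculation sC dC ∈ transportationPolytope' m n s d := by
  obtain ⟨hx0, hxr, hxc⟩ := hx
  refine ⟨fun i j => ?_, fun i => ?_, fun j => ?_⟩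
  · by_cases h : ∃ t, i = sC t ∧ j = dC t
    · obtain ⟨t, rfl, rfl⟩ := h
      simpa [cycleCirculation_apply_self sC dC hk hsC hdC t] using hεx t
    · exact add_nonneg (hx0 i j) (mul_nonneg hε (cycleCirculation_nonneg_of_not_exists sC dC h))
  · simp [sum_add_distrib, ← mul_sum, sum_cycleCirculation_row, hxr]
  · simp [sum_add_distrib, ← mul_sum, sum_cycleCirculation_col, hxc]

end TransportationPolytope

theorem stmt_15_general (m n : ℕ) (s : Fin m → ℝ) (d : Fin n → ℝ) (c : Fin m → Fin n → ℝ)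
    (xs : Fin m → Fin n → ℝ)
    (hfeas : xs ∈ transportationPolytope' m n s d)
    (hnd : ∀ y ∈ Set.extremePoints ℝ (transportationPolytope' m n s d), y ≠ xs →
      ∑ i, ∑ j, c i j * xs i j < ∑ i, ∑ j, c i j * y i j)
    (k : ℕ) [NeZero k] (hk : 2 ≤ k)
    (sC : Fin k → Fin m) (dC : Fin k → Fin n)
    (hsC : Function.Injective sC) (hdC : Function.Injective dC)
    (hadj : ∀ i : Fin k, 0 < xs (sC i) (dC i)) :
    ∑ i : Fin k, (c (sC i) (dC i) - c (sC (i + 1)) (dC i)) < 0 := by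
  obtain ⟨t₀, hεx⟩ := Finite.exists_min fun t => xs (sC t) (dC t)
  set ε := xs (sC t₀) (dC t₀)
  have hε : 0 < ε := hadj t₀
  set y := xs + ε • cycleCirculation sC dC
  have hy : y ∈ transportationPolytope' m n s d :=
    add_smul_cycleCirculation_mem_transportationPolytope' hfeas hk hsC hdC hε.le hεx
  have hyx : y ≠ xs := fun h => hε.ne' <| by
    simpa [y, cycleCirculation_apply_self sC dC hk hsC hdC] using
      congrFun (congrFun h (sC t₀)) (dC t₀)
  have hcost := lt_of_forall_extremePoints_lt isCompact_transportationPolytope'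
    convex_transportationPolytope' (costFunctional c) hfeas (by simpa using hnd) hy hyx
  rw [map_add, map_smul, costFunctional_cycleCirculation, smul_eq_mul] at hcost
  nlinarith

/-- for the optimal vertex x* of a nondegenerate transportation problem with
spanning-tree support T, and supply nodes s₁,…,s_k, demand nodes d₁,…,d_k (k ≥ 2, distinct)
with sᵢ adjacent to dᵢ in T, the cyclic alternating cost sum
∑ᵢ (c_{sᵢ,dᵢ} - c_{sᵢ₊₁,dᵢ}) (indices mod k) is negative. -/
theorem stmt_15 (m n : ℕ) (s : Fin m → ℝ) (d : Fin n → ℝ) (c : Fin m → Fin n → ℝ)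
    (xs : Fin m → Fin n → ℝ)
    (hfeas : xs ∈ transportationPolytope' m n s d)
    (hvert : xs ∈ Set.extremePoints ℝ (transportationPolytope' m n s d))
    (hopt : ∀ y ∈ transportationPolytope' m n s d,
      ∑ i, ∑ j, c i j * xs i j ≤ ∑ i, ∑ j, c i j * y i j)
    (hnd : ∀ y ∈ Set.extremePoints ℝ (transportationPolytope' m n s d), y ≠ xs →
      ∑ i, ∑ j, c i j * xs i j < ∑ i, ∑ j, c i j * y i j)
    (k : ℕ) [NeZero k] (hk : 2 ≤ k)
    (sC : Fin k → Fin m) (dC : Fin k → Fin n)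
    (hsC : Function.Injective sC) (hdC : Function.Injective dC)
    (hadj : ∀ i : Fin k, 0 < xs (sC i) (dC i)) :
    ∑ i : Fin k, (c (sC i) (dC i) - c (sC (i + 1)) (dC i)) < 0 :=
  stmt_15_general m n s d c xs hfeas hnd k hk sC dC hsC hdC hadj
end

section
/- Every $2 \times n$ nondegenerate transportation polytope has monotone diameter at most $n$: for any nondegenerate linear objective $c$ and any vertex $x$, there is a $c$-monotone edge path from $x$ to the optimal vertex of length at most $n$. In particular $2\times n$ transportation polytopes satisfy the monotone Hirsch conjecture (monotone diameter $\le$ number of facets minus dimension). -/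
open Finset

section General

variable {m n : ℕ} {s : Fin m → ℝ} {d : Fin n → ℝ}

theorem add_mem_transportationPolytope' {x v : Fin m → Fin n → ℝ}
    (hx : x ∈ transportationPolytope' m n s d) (hrow : ∀ i, ∑ j, v i j = 0)
    (hcol : ∀ j, ∑ i, v i j = 0) (hnonneg : ∀ i j, 0 ≤ x i j + v i j) :
    x + v ∈ transportationPolytope' m n s d := by
  refine ⟨hnonneg, fun i => ?_, fun j => ?_⟩ <;>
    simp only [Pi.add_apply, sum_add_distrib, hx.2.1, hx.2.2, hrow, hcol, add_zero]

theorem isExposed_setOf_forall_eq_zero {K : Set (Fin m → Fin n → ℝ)}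
    (hK : ∀ x ∈ K, ∀ i j, 0 ≤ x i j) (Z : Finset (Fin m × Fin n)) :
    IsExposed ℝ K {x ∈ K | ∀ e ∈ Z, x e.1 e.2 = 0} := by
  rintro ⟨x₀, hx₀K, hx₀Z⟩
  let entry (e : Fin m × Fin n) : (Fin m → Fin n → ℝ) →L[ℝ] ℝ :=
    (ContinuousLinearMap.proj (R := ℝ) (φ := fun _ => ℝ) e.2).comp
      (ContinuousLinearMap.proj (φ := fun _ => Fin n → ℝ) e.1)
  refine ⟨-∑ e ∈ Z, entry e, ?_⟩
  have happly (x : Fin m → Fin n → ℝ) : (-∑ e ∈ Z, entry e) x = -∑ e ∈ Z, x e.1 e.2 := by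
    simp [entry]
  have hsum : ∀ x ∈ K, ∑ e ∈ Z, x e.1 e.2 = 0 ↔ ∀ e ∈ Z, x e.1 e.2 = 0 := fun x hx =>
    sum_eq_zero_iff_of_nonneg fun e _ => hK x hx e.1 e.2
  ext x
  simp only [Set.mem_ofPred_eq, happly, neg_le_neg_iff]
  refine ⟨fun ⟨hx, hxZ⟩ => ⟨hx, fun y hy => ?_⟩, fun ⟨hx, hmax⟩ => ⟨hx, ?_⟩⟩
  · rw [(hsum x hx).2 hxZ]
    exact sum_nonneg fun e _ => hK y hy e.1 e.2
  · refine (hsum x hx).1 (le_antisymm ?_ (sum_nonneg fun e _ => hK x hx e.1 e.2))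
    simpa [(hsum x₀ hx₀K).2 hx₀Z] using hmax x₀ hx₀K

theorem eq_of_sum_eq_of_eq_off {x y : Fin m → Fin n → ℝ} (k : Fin n)
    (hrow : ∀ i, ∑ j, x i j = ∑ j, y i j) (hoff : ∀ i, ∀ j ≠ k, x i j = y i j) : x = y := by
  funext i j
  by_cases hj : j = k
  · subst hj
    have h := hrow i
    rw [← add_sum_erase _ _ (mem_univ j), ← add_sum_erase _ _ (mem_univ j),
      sum_congr rfl fun l hl => hoff i l (ne_of_mem_erase hl)] at h
    linarith
  · exact hoff i j hj

end General

theorem exists_injective_rank {n : ℕ} (r : Fin n → ℝ) :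
    ∃ key : Fin n → ℤ, Function.Injective key ∧ (∀ p q, key p < key q → r p ≤ r q) ∧
      ∀ j, 0 ≤ key j ∧ key j < n := by
  refine ⟨fun j => (((Tuple.sort r).symm j : ℕ) : ℤ), fun p q h => ?_, fun p q h => ?_,
    fun j => ⟨by positivity, by simp⟩⟩ <;> simp only [Nat.cast_inj, Nat.cast_lt] at h
  · exact (Tuple.sort r).symm.injective (Fin.ext h)
  · simpa using Tuple.monotone_sort r (Fin.le_iff_val_le_val.2 h.le)

section MonotonePath

variable {E : Type*} [AddCommGroup E] [Module ℝ E] [TopologicalSpace E]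

def IsMonotoneEdge (K : Set E) (f : E → ℝ) (x x' : E) : Prop :=
  x ≠ x' ∧ IsExposed ℝ K (segment ℝ x x') ∧ f x' < f x

def HasMonotonePath (K : Set E) (f : E → ℝ) (x : E) (N : ℕ) : Prop :=
  ∃ L ≤ N, ∃ v : Fin (L + 1) → E, v 0 = x ∧ (∀ t, v t ∈ Set.extremePoints ℝ K) ∧
    (∀ t : Fin L, IsMonotoneEdge K f (v t.castSucc) (v t.succ)) ∧
    ∀ y ∈ K, f (v (Fin.last L)) ≤ f y

namespace HasMonotonePath

variable {K : Set E} {f : E → ℝ} {x x' : E}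

theorem of_forall_le (hx : x ∈ Set.extremePoints ℝ K) (h : ∀ y ∈ K, f x ≤ f y) (N : ℕ) :
    HasMonotonePath K f x N :=
  ⟨0, N.zero_le, fun _ => x, rfl, fun _ => hx, fun t => t.elim0, h⟩

theorem cons {N : ℕ} (hx : x ∈ Set.extremePoints ℝ K) (hxx' : IsMonotoneEdge K f x x')
    (h : HasMonotonePath K f x' N) : HasMonotonePath K f x (N + 1) := by
  obtain ⟨L, hL, v, rfl, hv, hedge, hopt⟩ := h
  exact ⟨L + 1, by omega, Fin.cons x v, rfl, Fin.cases hx hv, Fin.cases hxx' hedge, hopt⟩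

end HasMonotonePath

end MonotonePath

section TwoRows

variable {n : ℕ} {s : Fin 2 → ℝ} {d : Fin n → ℝ}

local notation "𝒫" => transportationPolytope' 2 n s d

theorem col_sum {x : Fin 2 → Fin n → ℝ} (hx : x ∈ 𝒫) (j : Fin n) : x 0 j + x 1 j = d j := by
  simpa [Fin.sum_univ_two] using hx.2.2 j

/-- The alternating cycle that moves one unit of row-`0` mass from column `p` to column `q`. -/
def altCycle (p q : Fin n) : Fin 2 → Fin n → ℝ :=
  ![Pi.single q 1 - Pi.single p 1, Pi.single p 1 - Pi.single q 1]

section altCycle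

variable {p q : Fin n}

@[simp] theorem altCycle_zero (j : Fin n) :
    altCycle p q 0 j = (Pi.single q 1 : Fin n → ℝ) j - (Pi.single p 1 : Fin n → ℝ) j := rfl

@[simp] theorem altCycle_one (j : Fin n) :
    altCycle p q 1 j = (Pi.single p 1 : Fin n → ℝ) j - (Pi.single q 1 : Fin n → ℝ) j := rfl

theorem altCycle_of_ne {j : Fin n} (hp : j ≠ p) (hq : j ≠ q) (i : Fin 2) :
    altCycle p q i j = 0 := by
  fin_cases i <;> simp [hp, hq]

theorem add_smul_altCycle_mem {x : Fin 2 → Fin n → ℝ} {t : ℝ} (hx : x ∈ 𝒫) (hpq : p ≠ q)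
    (h0p : t ≤ x 0 p) (h1p : -t ≤ x 1 p) (h0q : -t ≤ x 0 q) (h1q : t ≤ x 1 q) :
    x + t • altCycle p q ∈ 𝒫 := by
  refine add_mem_transportationPolytope' hx (fun i => ?_) (fun j => ?_) (fun i j => ?_)
  · fin_cases i <;> simp [sum_sub_distrib, ← mul_sum]
  · simp only [Fin.sum_univ_two, Pi.smul_apply, smul_eq_mul, altCycle_zero, altCycle_one]
    ring
  · have := hx.1 i j
    by_cases hjp : j = p
    · subst hjp; fin_cases i <;> simp [hpq] <;> linarith
    by_cases hjq : j = q
    · subst hjq; fin_cases i <;> simp [hjp] <;> linarith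
    simpa [altCycle_of_ne hjp hjq] using this

theorem eq_add_smul_altCycle {x y : Fin 2 → Fin n → ℝ} (hx : x ∈ 𝒫) (hy : y ∈ 𝒫) (hpq : p ≠ q)
    (hoff : ∀ i j, j ≠ p → j ≠ q → y i j = x i j) :
    y = x + (x 0 p - y 0 p) • altCycle p q := by
  refine eq_of_sum_eq_of_eq_off q (fun i => ?_) (fun i j hjq => ?_)
  · fin_cases i <;> simp [sum_add_distrib, sum_sub_distrib, ← mul_sum, hx.2.1, hy.2.1]
  · by_cases hjp : j = p
    · subst hjp
      have := col_sum hx j; have := col_sum hy j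
      fin_cases i
      · simp [hjq]
      · simp [hjq]; linarith
    · simp [hoff i j hjp hjq, altCycle_of_ne hjp hjq]

end altCycle

def objective (c x : Fin 2 → Fin n → ℝ) : ℝ := ∑ i, ∑ j, c i j * x i j

def reducedCost (c : Fin 2 → Fin n → ℝ) (j : Fin n) : ℝ := c 0 j - c 1 j

section objective

variable (c : Fin 2 → Fin n → ℝ)

theorem objective_add_smul_altCycle (x : Fin 2 → Fin n → ℝ) (t : ℝ) (p q : Fin n) :
    objective c (x + t • altCycle p q) =
      objective c x + t * (reducedCost c q - reducedCost c p) := by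
  simp only [objective, reducedCost, Fin.sum_univ_two, Pi.add_apply, Pi.smul_apply, smul_eq_mul,
    altCycle_zero, altCycle_one, mul_add, mul_sub, sum_add_distrib, sum_sub_distrib,
    mul_left_comm _ t, ← mul_sum, Pi.single_apply, mul_ite, mul_one, mul_zero, sum_ite_eq',
    mem_univ, if_true]
  ring

theorem objective_sub_objective {x y : Fin 2 → Fin n → ℝ} (hx : x ∈ 𝒫) (hy : y ∈ 𝒫) :
    objective c y - objective c x = ∑ j, reducedCost c j * (y 0 j - x 0 j) := by
  simp only [objective, reducedCost, Fin.sum_univ_two, ← sum_add_distrib, ← sum_sub_distrib]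
  refine sum_congr rfl fun j _ => ?_
  linear_combination c 1 j * (col_sum hy j - col_sum hx j)

theorem objective_le_of_reducedCost {x : Fin 2 → Fin n → ℝ} (hx : x ∈ 𝒫) (k : Fin n)
    (h0 : ∀ j, x 0 j ≠ 0 → reducedCost c j ≤ reducedCost c k)
    (h1 : ∀ j, x 1 j ≠ 0 → reducedCost c k ≤ reducedCost c j) {y : Fin 2 → Fin n → ℝ}
    (hy : y ∈ 𝒫) : objective c x ≤ objective c y := by
  have hrow : ∑ j, (y 0 j - x 0 j) = 0 := by rw [sum_sub_distrib, hx.2.1, hy.2.1, sub_self]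
  have hterm : ∀ j, 0 ≤ (reducedCost c j - reducedCost c k) * (y 0 j - x 0 j) := by
    intro j
    rcases lt_trichotomy (reducedCost c j) (reducedCost c k) with hlt | heq | hgt
    · have hx1 : x 1 j = 0 := not_not.1 fun h => (h1 j h).not_gt hlt
      have := col_sum hx j; have := col_sum hy j; have := hy.1 1 j
      exact mul_nonneg_of_nonpos_of_nonpos (by linarith) (by linarith)
    · simp [heq]
    · have hx0 : x 0 j = 0 := not_not.1 fun h => (h0 j h).not_gt hgt
      exact mul_nonneg (by linarith) (by linarith [hy.1 0 j])
  have := sum_nonneg fun j (_ : j ∈ univ) => hterm j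
  simp only [sub_mul, sum_sub_distrib, ← mul_sum, hrow, mul_zero, sub_zero] at this
  linarith [objective_sub_objective c hx hy]

end objective

theorem col_eq_of_forall_eq_zero {x y : Fin 2 → Fin n → ℝ} (hx : x ∈ 𝒫) (hy : y ∈ 𝒫) {j : Fin n}
    (hj : x 0 j = 0 ∨ x 1 j = 0) (h : ∀ i, x i j = 0 → y i j = 0) (i : Fin 2) :
    y i j = x i j := by
  have := col_sum hx j; have := col_sum hy j
  rcases hj with hj | hj <;> have := h _ hj <;> fin_cases i <;> simp <;> linarith

theorem subsingleton_of_mem_extremePoints {x : Fin 2 → Fin n → ℝ}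
    (hx : x ∈ Set.extremePoints ℝ 𝒫) : {j | x 0 j ≠ 0 ∧ x 1 j ≠ 0}.Subsingleton := by
  intro p hp q hq
  by_contra hpq
  set ε := min (min (x 0 p) (x 1 p)) (min (x 0 q) (x 1 q))
  have hε : 0 < ε := lt_min (lt_min ((hx.1.1 0 p).lt_of_ne' hp.1) ((hx.1.1 1 p).lt_of_ne' hp.2))
    (lt_min ((hx.1.1 0 q).lt_of_ne' hq.1) ((hx.1.1 1 q).lt_of_ne' hq.2))
  have hε₁ : ε ≤ x 0 p := (min_le_left _ _).trans (min_le_left _ _)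
  have hε₂ : ε ≤ x 1 p := (min_le_left _ _).trans (min_le_right _ _)
  have hε₃ : ε ≤ x 0 q := (min_le_right _ _).trans (min_le_left _ _)
  have hε₄ : ε ≤ x 1 q := (min_le_right _ _).trans (min_le_right _ _)
  have hmid : x ∈ openSegment ℝ (x + ε • altCycle p q) (x + (-ε) • altCycle p q) :=
    ⟨1 / 2, 1 / 2, by norm_num, by norm_num, by norm_num, by module⟩
  have heq := ((mem_extremePoints.1 hx).2 _
    (add_smul_altCycle_mem hx.1 hpq hε₁ (by linarith) (by linarith) hε₄) _
    (add_smul_altCycle_mem hx.1 hpq (by linarith) (by linarith) (by linarith) (by linarith))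
    hmid).1
  have := congrFun (congrFun heq 0) q
  simp [hpq] at this
  exact hε.ne' this

theorem mem_extremePoints_of_subsingleton {x : Fin 2 → Fin n → ℝ} (hx : x ∈ 𝒫)
    (hfrac : {j | x 0 j ≠ 0 ∧ x 1 j ≠ 0}.Subsingleton) : x ∈ Set.extremePoints ℝ 𝒫 := by
  have key : ∀ y ∈ 𝒫, ∀ z ∈ 𝒫, x ∈ openSegment ℝ y z → y = x := by
    rintro y hy z hz ⟨a, b, ha, hb, -, hyz⟩
    have hzero : ∀ i j, x i j = 0 → y i j = 0 := by
      intro i j hxij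
      have := congrFun (congrFun hyz i) j
      simp only [Pi.add_apply, Pi.smul_apply, smul_eq_mul, hxij] at this
      nlinarith [hy.1 i j, hz.1 i j]
    have hcol : ∀ j, (x 0 j = 0 ∨ x 1 j = 0) → ∀ i, y i j = x i j := fun j hj =>
      col_eq_of_forall_eq_zero hx hy hj (fun i => hzero i j)
    funext i j
    by_cases hj : x 0 j = 0 ∨ x 1 j = 0
    · exact hcol j hj i
    refine congrFun (congrFun (eq_of_sum_eq_of_eq_off j (fun i => ?_) fun i l hl => ?_) i) j
    · rw [hx.2.1, hy.2.1]
    · exact hcol l (by_contra fun hl' => hl (hfrac (not_or.1 hl') (not_or.1 hj))) i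
  exact mem_extremePoints.2 ⟨hx, fun y hy z hz hyz =>
    ⟨key y hy z hz hyz, key z hz y hy (openSegment_symm ℝ y z ▸ hyz)⟩⟩

def pivot (x : Fin 2 → Fin n → ℝ) (p q : Fin n) : Fin 2 → Fin n → ℝ :=
  x + min (x 0 p) (x 1 q) • altCycle p q

section pivot

variable {x : Fin 2 → Fin n → ℝ} {p q : Fin n}

theorem pivot_of_ne {j : Fin n} (hp : j ≠ p) (hq : j ≠ q) (i : Fin 2) :
    pivot x p q i j = x i j := by
  simp [pivot, altCycle_of_ne hp hq]

theorem pivot_mem (hx : x ∈ 𝒫) (hpq : p ≠ q) : pivot x p q ∈ 𝒫 := by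
  have := min_le_left (x 0 p) (x 1 q); have := min_le_right (x 0 p) (x 1 q)
  have := le_min (hx.1 0 p) (hx.1 1 q)
  exact add_smul_altCycle_mem hx hpq (by linarith) (by linarith [hx.1 1 p])
    (by linarith [hx.1 0 q]) (by linarith)

theorem pivot_eq_zero_or (hpq : p ≠ q) : pivot x p q 0 p = 0 ∨ pivot x p q 1 q = 0 := by
  rcases min_choice (x 0 p) (x 1 q) with h | h <;> simp [pivot, h, hpq, hpq.symm]

theorem pivot_ne (hpq : p ≠ q) (hp : 0 < x 0 p) (hq : 0 < x 1 q) : x ≠ pivot x p q := by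
  intro h
  have := congrFun (congrFun h 0) q
  simp [pivot, hpq.symm] at this
  exact (lt_min hp hq).ne' this

theorem isExposed_segment_pivot (hx : x ∈ 𝒫) (hpq : p ≠ q) (hp : 0 < x 0 p) (hq : 0 < x 1 q)
    (hint : ∀ j, j ≠ p → j ≠ q → x 0 j = 0 ∨ x 1 j = 0) (hend : x 1 p = 0 ∨ x 0 q = 0) :
    IsExposed ℝ 𝒫 (segment ℝ x (pivot x p q)) := by
  set Z := univ.filter fun e : Fin 2 × Fin n => e.2 ≠ p ∧ e.2 ≠ q ∧ x e.1 e.2 = 0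
  have hF := isExposed_setOf_forall_eq_zero (fun z (hz : z ∈ 𝒫) => hz.1) Z
  suffices segment ℝ x (pivot x p q) = {z ∈ 𝒫 | ∀ e ∈ Z, z e.1 e.2 = 0} by rwa [this]
  refine subset_antisymm ((hF.convex convex_transportationPolytope').segment_subset
    ⟨hx, fun e he => (mem_filter.1 he).2.2.2⟩
    ⟨pivot_mem hx hpq, fun e he => ?_⟩) ?_
  · obtain ⟨-, hp', hq', he⟩ := mem_filter.1 he
    rw [pivot_of_ne hp' hq', he]
  rintro z ⟨hz, hzZ⟩
  have hzx := eq_add_smul_altCycle hx hz hpq fun i j hjp hjq =>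
    col_eq_of_forall_eq_zero hx hz (hint j hjp hjq)
      (fun i hi => hzZ (i, j) (mem_filter.2 ⟨mem_univ _, hjp, hjq, hi⟩)) i
  set θ := x 0 p - z 0 p
  have hδ : 0 < min (x 0 p) (x 1 q) := lt_min hp hq
  have hz1p := congrFun (congrFun hzx 1) p
  have hz0q := congrFun (congrFun hzx 0) q
  have hz1q := congrFun (congrFun hzx 1) q
  simp only [Pi.add_apply, Pi.smul_apply, smul_eq_mul, altCycle_zero, altCycle_one,
    Pi.single_apply, hpq, hpq.symm, if_true, if_false] at hz1p hz0q hz1q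
  have hθ : 0 ≤ θ := by
    rcases hend with h | h
    · linarith [hz.1 1 p]
    · linarith [hz.1 0 q]
  have hθδ : θ ≤ min (x 0 p) (x 1 q) := le_min (by linarith [hz.1 0 p]) (by linarith [hz.1 1 q])
  rw [segment_eq_image']
  refine ⟨θ / min (x 0 p) (x 1 q), ⟨div_nonneg hθ hδ.le, (div_le_one hδ).2 hθδ⟩, ?_⟩
  rw [hzx, pivot, add_sub_cancel_left]
  simp only [smul_smul, div_mul_cancel₀ _ hδ.ne']

end pivot

theorem card_support_le {x : Fin 2 → Fin n → ℝ} (hx : ∀ j, x 0 j = 0 ∨ x 1 j = 0) :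
    #{e : Fin 2 × Fin n | x e.1 e.2 ≠ 0} ≤ n := by
  refine (card_le_card_of_injOn Prod.snd (fun _ _ => mem_coe.2 (mem_univ _)) ?_).trans_eq
    (card_fin n)
  rintro ⟨i, j⟩ hi ⟨i', j'⟩ hi' (rfl : j = j')
  simp only [coe_filter, mem_univ, true_and, Set.mem_ofPred_eq] at hi hi'
  rcases hx j with h | h <;> fin_cases i <;> fin_cases i' <;> simp_all

theorem sum_ne_of_card_support (hsd : ∑ i, s i = ∑ j, d j) (hd : ∀ j, 0 ≤ d j)
    (hnondeg : ∀ x ∈ Set.extremePoints ℝ 𝒫, #{e : Fin 2 × Fin n | x e.1 e.2 ≠ 0} = n + 1)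
    (A : Finset (Fin n)) : ∑ j ∈ A, d j ≠ s 0 := by
  intro hA
  set z : Fin 2 → Fin n → ℝ :=
    ![fun j => if j ∈ A then d j else 0, fun j => if j ∈ A then 0 else d j]
  have hcol (j : Fin n) : z 0 j + z 1 j = d j := by by_cases hj : j ∈ A <;> simp [z, hj]
  have hrow0 : ∑ j, z 0 j = s 0 := by simpa [z, sum_ite_mem] using hA
  have hz : z ∈ 𝒫 := by
    refine ⟨fun i j => ?_, fun i => ?_, fun j => by simpa [Fin.sum_univ_two] using hcol j⟩
    · fin_cases i <;> by_cases hj : j ∈ A <;> simp [z, hj, hd j]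
    · have hsum : ∑ j, z 0 j + ∑ j, z 1 j = s 0 + s 1 := by
        rw [← sum_add_distrib, sum_congr rfl fun j _ => hcol j, ← hsd, Fin.sum_univ_two]
      fin_cases i
      · exact hrow0
      · simp only [Fin.mk_one, Fin.isValue]; linarith
  have hint (j : Fin n) : z 0 j = 0 ∨ z 1 j = 0 := by by_cases hj : j ∈ A <;> simp [z, hj]
  have hzext : z ∈ Set.extremePoints ℝ 𝒫 :=
    mem_extremePoints_of_subsingleton hz fun j hj _ _ => absurd (hint j) (not_or.2 hj)
  have := card_support_le hint
  rw [hnondeg z hzext] at this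
  omega

theorem exists_ne_zero_ne_zero (hN : ∀ A : Finset (Fin n), ∑ j ∈ A, d j ≠ s 0)
    {x : Fin 2 → Fin n → ℝ} (hx : x ∈ 𝒫) : ∃ k, x 0 k ≠ 0 ∧ x 1 k ≠ 0 := by
  by_contra! h
  refine hN {j | x 0 j ≠ 0} ?_
  rw [← hx.2.1 0, ← sum_filter_ne_zero (f := x 0)]
  refine sum_congr rfl fun j hj => ?_
  linarith [col_sum hx j, h j (mem_filter.1 hj).2]

def IsSplitAt (x : Fin 2 → Fin n → ℝ) (k : Fin n) : Prop := ∀ j ≠ k, x 0 j = 0 ∨ x 1 j = 0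

namespace IsSplitAt

variable {x : Fin 2 → Fin n → ℝ} {k : Fin n}

theorem mem_extremePoints (hx : x ∈ 𝒫) (h : IsSplitAt x k) : x ∈ Set.extremePoints ℝ 𝒫 :=
  mem_extremePoints_of_subsingleton hx <| Set.subsingleton_singleton.anti fun j hj =>
    by_contra fun hjk => absurd (h j hjk) (not_or.2 hj)

theorem ne_zero (hN : ∀ A : Finset (Fin n), ∑ j ∈ A, d j ≠ s 0) (hx : x ∈ 𝒫)
    (h : IsSplitAt x k) : x 0 k ≠ 0 ∧ x 1 k ≠ 0 := by
  obtain ⟨j, hj⟩ := exists_ne_zero_ne_zero hN hx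
  obtain rfl : j = k := by_contra fun hjk => absurd (h j hjk) (not_or.2 hj)
  exact hj

end IsSplitAt

theorem exists_isSplitAt (hN : ∀ A : Finset (Fin n), ∑ j ∈ A, d j ≠ s 0)
    {x : Fin 2 → Fin n → ℝ} (hx : x ∈ Set.extremePoints ℝ 𝒫) : ∃ k, IsSplitAt x k := by
  obtain ⟨k, hk⟩ := exists_ne_zero_ne_zero hN hx.1
  exact ⟨k, fun j hjk => by_contra fun hj => hjk
    (subsingleton_of_mem_extremePoints hx (not_or.1 hj) hk)⟩

theorem isMonotoneEdge_pivot {c : Fin 2 → Fin n → ℝ} {x : Fin 2 → Fin n → ℝ} {p q k k' : Fin n}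
    (hc : Set.InjOn (objective c) (Set.extremePoints ℝ 𝒫))
    (hx : x ∈ 𝒫) (hsplit : IsSplitAt x k) (hk : k = p ∨ k = q) (hpq : p ≠ q)
    (hp : x 0 p ≠ 0) (hq : x 1 q ≠ 0) (hsplit' : IsSplitAt (pivot x p q) k')
    (hr : reducedCost c q ≤ reducedCost c p) : IsMonotoneEdge 𝒫 (objective c) x (pivot x p q) := by
  have hp' : 0 < x 0 p := (hx.1 0 p).lt_of_ne' hp
  have hq' : 0 < x 1 q := (hx.1 1 q).lt_of_ne' hq
  have hne := pivot_ne hpq hp' hq'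
  have hint (j : Fin n) (hjp : j ≠ p) (hjq : j ≠ q) : x 0 j = 0 ∨ x 1 j = 0 :=
    hsplit j (by rcases hk with rfl | rfl <;> assumption)
  have hend : x 1 p = 0 ∨ x 0 q = 0 := by
    rcases hk with rfl | rfl
    · exact .inr ((hsplit q hpq.symm).resolve_right hq)
    · exact .inl ((hsplit p hpq).resolve_left hp)
  refine ⟨hne, isExposed_segment_pivot hx hpq hp' hq' hint hend, ?_⟩
  have hobj : objective c (pivot x p q) =
      objective c x + min (x 0 p) (x 1 q) * (reducedCost c q - reducedCost c p) :=
    objective_add_smul_altCycle c x _ p q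
  have hrq : reducedCost c q ≠ reducedCost c p := fun h =>
    hne (hc (hsplit.mem_extremePoints hx) (hsplit'.mem_extremePoints (pivot_mem hx hpq))
      (by rw [hobj, h, sub_self, mul_zero, add_zero]))
  rw [hobj]
  linarith [mul_neg_of_pos_of_neg (lt_min hp' hq') (sub_neg.2 (hr.lt_of_ne hrq))]

section Window

variable {α : Type*} [LinearOrder α] (key : Fin n → α)

def InWindow (x : Fin 2 → Fin n → ℝ) (k : Fin n) (lo hi : α) : Prop :=
  (∀ j ≠ k, x 0 j ≠ 0 → key j < hi) ∧ (∀ j ≠ k, x 1 j ≠ 0 → lo < key j) ∧ lo ≤ key k ∧ key k ≤ hi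

variable {key} {x : Fin 2 → Fin n → ℝ} {k : Fin n} {lo hi : α}

theorem card_window_lt {lo' hi' : α} (hlo : lo ≤ lo') (hhi : hi' ≤ hi) {b : Fin n}
    (hb : lo < key b ∧ key b < hi) (hb' : ¬(lo' < key b ∧ key b < hi')) :
    #{j | lo' < key j ∧ key j < hi'} < #{j | lo < key j ∧ key j < hi} := by
  refine card_lt_card ((ssubset_iff_of_subset fun j hj => ?_).2 ⟨b, ?_, ?_⟩)
  · simp only [mem_filter, mem_univ, true_and] at hj ⊢
    exact ⟨hlo.trans_lt hj.1, hj.2.trans_le hhi⟩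
  · simpa using hb
  · simpa using hb'

theorem InWindow.pivot_out (hsplit : IsSplitAt x k) (hwin : InWindow key x k lo hi)
    (hinj : Function.Injective key) {b : Fin n} (hbk : b ≠ k) (hkb : key k < key b)
    (hmax : ∀ j ≠ k, x 0 j ≠ 0 → key k < key j → key j ≤ key b) :
    ∃ k', IsSplitAt (pivot x b k) k' ∧ InWindow key (pivot x b k) k' lo (key b) := by
  have hoff {i j} (hjb : j ≠ b) (hjk : j ≠ k) : pivot x b k i j = x i j := pivot_of_ne hjb hjk i
  have hlt {j} (hjb : j ≠ b) (hjk : j ≠ k) (hj : x 0 j ≠ 0) : key j < key b := by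
    rcases (hinj.ne hjk).lt_or_gt with h | h
    · exact h.trans hkb
    · exact (hmax j hjk hj h).lt_of_ne (hinj.ne hjb)
  have hlo : lo < key b := hwin.2.2.1.trans_lt hkb
  rcases pivot_eq_zero_or (x := x) hbk with h | h
  · refine ⟨k, fun j hjk => ?_, ⟨fun j hjk hj => ?_, fun j hjk hj => ?_, hwin.2.2.1, hkb.le⟩⟩
    · by_cases hjb : j = b
      · subst hjb; exact .inl h
      · rw [hoff hjb hjk, hoff hjb hjk]; exact hsplit j hjk
    · by_cases hjb : j = b
      · subst hjb; exact absurd h hj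
      · exact hlt hjb hjk (hoff hjb hjk ▸ hj)
    · by_cases hjb : j = b
      · exact hjb ▸ hlo
      · exact hwin.2.1 j hjk (hoff hjb hjk ▸ hj)
  · refine ⟨b, fun j hjb => ?_, ⟨fun j hjb hj => ?_, fun j hjb hj => ?_, hlo.le, le_rfl⟩⟩
    · by_cases hjk : j = k
      · subst hjk; exact .inr h
      · rw [hoff hjb hjk, hoff hjb hjk]; exact hsplit j hjk
    · by_cases hjk : j = k
      · exact hjk ▸ hkb
      · exact hlt hjb hjk (hoff hjb hjk ▸ hj)
    · by_cases hjk : j = k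
      · subst hjk; exact absurd h hj
      · exact hwin.2.1 j hjk (hoff hjb hjk ▸ hj)

theorem InWindow.pivot_in (hsplit : IsSplitAt x k) (hwin : InWindow key x k lo hi)
    (hinj : Function.Injective key) {a : Fin n} (hak : a ≠ k) (hka : key a < key k)
    (hmin : ∀ j ≠ k, x 1 j ≠ 0 → key j < key k → key a ≤ key j) :
    ∃ k', IsSplitAt (pivot x k a) k' ∧ InWindow key (pivot x k a) k' (key a) hi := by
  have hoff {i j} (hja : j ≠ a) (hjk : j ≠ k) : pivot x k a i j = x i j := pivot_of_ne hjk hja i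
  have hgt {j} (hja : j ≠ a) (hjk : j ≠ k) (hj : x 1 j ≠ 0) : key a < key j := by
    rcases (hinj.ne hjk).lt_or_gt with h | h
    · exact (hmin j hjk hj h).lt_of_ne (hinj.ne hja).symm
    · exact hka.trans h
  have hhi : key a < hi := hka.trans_le hwin.2.2.2
  rcases pivot_eq_zero_or (x := x) hak.symm with h | h
  · refine ⟨a, fun j hja => ?_, ⟨fun j hja hj => ?_, fun j hja hj => ?_, le_rfl, hhi.le⟩⟩
    · by_cases hjk : j = k
      · subst hjk; exact .inl h
      · rw [hoff hja hjk, hoff hja hjk]; exact hsplit j hjk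
    · by_cases hjk : j = k
      · subst hjk; exact absurd h hj
      · exact hwin.1 j hjk (hoff hja hjk ▸ hj)
    · by_cases hjk : j = k
      · exact hjk ▸ hka
      · exact hgt hja hjk (hoff hja hjk ▸ hj)
  · refine ⟨k, fun j hjk => ?_, ⟨fun j hjk hj => ?_, fun j hjk hj => ?_, hka.le, hwin.2.2.2⟩⟩
    · by_cases hja : j = a
      · subst hja; exact .inr h
      · rw [hoff hja hjk, hoff hja hjk]; exact hsplit j hjk
    · by_cases hja : j = a
      · exact hja ▸ hhi
      · exact hwin.1 j hjk (hoff hja hjk ▸ hj)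
    · by_cases hja : j = a
      · subst hja; exact absurd h hj
      · exact hgt hja hjk (hoff hja hjk ▸ hj)

variable {c : Fin 2 → Fin n → ℝ}

theorem optimal_or_exists_pivot (hN : ∀ A : Finset (Fin n), ∑ j ∈ A, d j ≠ s 0)
    (hc : Set.InjOn (objective c) (Set.extremePoints ℝ 𝒫))
    (hinj : Function.Injective key)
    (hkey : ∀ p q, key p < key q → reducedCost c p ≤ reducedCost c q)
    (hx : x ∈ 𝒫) (hsplit : IsSplitAt x k) (hwin : InWindow key x k lo hi) :
    (∀ y ∈ 𝒫, objective c x ≤ objective c y) ∨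
      ∃ x' k' lo' hi', x' ∈ 𝒫 ∧ IsSplitAt x' k' ∧ InWindow key x' k' lo' hi' ∧
        #{j | lo' < key j ∧ key j < hi'} < #{j | lo < key j ∧ key j < hi} ∧
        IsMonotoneEdge 𝒫 (objective c) x x' := by
  have hk := hsplit.ne_zero hN hx
  by_cases hout : ∃ b ≠ k, x 0 b ≠ 0 ∧ key k < key b
  · obtain ⟨b, hb, hbmax⟩ := exists_max_image {b | b ≠ k ∧ x 0 b ≠ 0 ∧ key k < key b} key
      (filter_nonempty_iff.2 (by simpa using hout))
    obtain ⟨-, hbk, hb, hkb⟩ := mem_filter.1 hb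
    obtain ⟨k', hsplit', hwin'⟩ := hwin.pivot_out hsplit hinj hbk hkb
      fun j hjk hj hkj => hbmax j (by simp [hjk, hj, hkj])
    refine .inr ⟨_, k', _, _, pivot_mem hx hbk, hsplit', hwin',
      card_window_lt le_rfl (hwin.1 b hbk hb).le ⟨hwin.2.2.1.trans_lt hkb, hwin.1 b hbk hb⟩
        (by simp), isMonotoneEdge_pivot hc hx hsplit (.inr rfl) hbk hb hk.2 hsplit'
        (hkey k b hkb)⟩
  by_cases hin : ∃ a ≠ k, x 1 a ≠ 0 ∧ key a < key k
  · obtain ⟨a, ha, hamin⟩ := exists_min_image {a | a ≠ k ∧ x 1 a ≠ 0 ∧ key a < key k} key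
      (filter_nonempty_iff.2 (by simpa using hin))
    obtain ⟨-, hak, ha, hka⟩ := mem_filter.1 ha
    obtain ⟨k', hsplit', hwin'⟩ := hwin.pivot_in hsplit hinj hak hka
      fun j hjk hj hjk' => hamin j (by simp [hjk, hj, hjk'])
    refine .inr ⟨_, k', _, _, pivot_mem hx hak.symm, hsplit', hwin',
      card_window_lt (hwin.2.1 a hak ha).le le_rfl ⟨hwin.2.1 a hak ha, hka.trans_le hwin.2.2.2⟩
        (by simp), isMonotoneEdge_pivot hc hx hsplit (.inl rfl) hak.symm hk.1 ha hsplit'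
        (hkey a k hka)⟩
  push Not at hout hin
  refine .inl fun y hy => objective_le_of_reducedCost c hx k (fun j hj => ?_) (fun j hj => ?_) hy
  · rcases eq_or_ne j k with rfl | hjk
    · exact le_rfl
    · exact hkey j k ((hout j hjk hj).lt_of_ne (hinj.ne hjk))
  · rcases eq_or_ne j k with rfl | hjk
    · exact le_rfl
    · exact hkey k j ((hin j hjk hj).lt_of_ne (hinj.ne hjk).symm)

theorem hasMonotonePath_of_inWindow (hN : ∀ A : Finset (Fin n), ∑ j ∈ A, d j ≠ s 0)
    (hc : Set.InjOn (objective c) (Set.extremePoints ℝ 𝒫))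
    (hinj : Function.Injective key)
    (hkey : ∀ p q, key p < key q → reducedCost c p ≤ reducedCost c q)
    {N : ℕ} (hx : x ∈ 𝒫) (hsplit : IsSplitAt x k) (hwin : InWindow key x k lo hi)
    (hcard : #{j | lo < key j ∧ key j < hi} ≤ N) : HasMonotonePath 𝒫 (objective c) x N := by
  induction N generalizing x k lo hi with
  | zero =>
    rcases optimal_or_exists_pivot hN hc hinj hkey hx hsplit hwin with
      hopt | ⟨_, _, _, _, -, -, -, hlt, -⟩
    · exact .of_forall_le (hsplit.mem_extremePoints hx) hopt 0
    · omega
  | succ N ih =>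
    rcases optimal_or_exists_pivot hN hc hinj hkey hx hsplit hwin with
      hopt | ⟨x', k', lo', hi', hx', hsplit', hwin', hlt, hedge⟩
    · exact .of_forall_le (hsplit.mem_extremePoints hx) hopt _
    · exact .cons (hsplit.mem_extremePoints hx) hedge (ih hx' hsplit' hwin' (by omega))

end Window

end TwoRows

/-- a nondegenerate 2×n transportation polytope has monotone diameter at most
n: for every nondegenerate linear objective c and every vertex x₀ there is a c-monotone edge
path from x₀ to the optimal vertex of length at most n. Since such a polytope has at most 2n
facets and dimension n - 1 ≥ ... this realizes the monotone Hirsch bound. -/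
theorem stmt_16 (n : ℕ) (s : Fin 2 → ℝ) (d : Fin n → ℝ)
    (hsd : ∑ i, s i = ∑ j, d j)
    (hnondeg : ∀ x ∈ Set.extremePoints ℝ (transportationPolytope' 2 n s d),
      (Finset.univ.filter (fun p : Fin 2 × Fin n => x p.1 p.2 ≠ 0)).card = n + 1)
    (c : Fin 2 → Fin n → ℝ)
    (hc : ∀ x ∈ Set.extremePoints ℝ (transportationPolytope' 2 n s d),
      ∀ y ∈ Set.extremePoints ℝ (transportationPolytope' 2 n s d), x ≠ y →
        ∑ i, ∑ j, c i j * x i j ≠ ∑ i, ∑ j, c i j * y i j)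
    (x0 : Fin 2 → Fin n → ℝ)
    (hx0 : x0 ∈ Set.extremePoints ℝ (transportationPolytope' 2 n s d)) :
    ∃ L, L ≤ n ∧ ∃ p : Fin (L + 1) → (Fin 2 → Fin n → ℝ),
      p 0 = x0 ∧
      (∀ t, p t ∈ Set.extremePoints ℝ (transportationPolytope' 2 n s d)) ∧
      (∀ t : Fin L, p t.castSucc ≠ p t.succ ∧
        IsExposed ℝ (transportationPolytope' 2 n s d)
          (segment ℝ (p t.castSucc) (p t.succ)) ∧
        ∑ i, ∑ j, c i j * p t.succ i j < ∑ i, ∑ j, c i j * p t.castSucc i j) ∧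
      ∀ y ∈ transportationPolytope' 2 n s d,
        ∑ i, ∑ j, c i j * p (Fin.last L) i j ≤ ∑ i, ∑ j, c i j * y i j := by
  have hd (j : Fin n) : 0 ≤ d j := col_sum hx0.1 j ▸ add_nonneg (hx0.1.1 0 j) (hx0.1.1 1 j)
  have hN := sum_ne_of_card_support hsd hd hnondeg
  obtain ⟨k, hsplit⟩ := exists_isSplitAt hN hx0
  obtain ⟨key, hinj, hkey, hrange⟩ := exists_injective_rank (reducedCost c)
  have hwin : InWindow key x0 k (-1) n := ⟨fun j _ _ => (hrange j).2,
    fun j _ _ => by linarith [(hrange j).1], by linarith [(hrange k).1], (hrange k).2.le⟩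
  have hinjc : Set.InjOn (objective c) (Set.extremePoints ℝ (transportationPolytope' 2 n s d)) :=
    fun x hx y hy h => not_not.1 fun hxy => hc x hx y hy hxy h
  exact hasMonotonePath_of_inWindow hN hinjc hinj hkey hx0.1 hsplit hwin
    ((card_filter_le _ _).trans (card_fin n).le)
end
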